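/- Define q₀(k,θ) = sin(θ/2)·sin(kθ/2)/sin²((1-k)θ/4) and q₁(k) = sin(kπ/2)/sin²((1-k)π/4) for 0 < k < 1, 0 < θ < 2π. Then for 0 < θ < π: q₁(k) ≤ q₀(k,θ) ≤ (π·sin(θ/2)/θ)²·q₁(k), and for π < θ < 2π: (π·sin(θ/2)/θ)²·q₁(k) ≤ q₀(k,θ) ≤ q₁(k). -/

import Mathlib

open Real

noncomputable def q0 (k θ : ℝ) : ℝ :=
  Real.sin (θ / 2) * Real.sin (k * θ / 2) / (Real.sin ((1 - k) * θ / 4))^2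

noncomputable def q1 (k : ℝ) : ℝ :=
  Real.sin (k * Real.pi / 2) / (Real.sin ((1 - k) * Real.pi / 4))^2

open Set

/-!
The identity `sin (x + y) * sin (x - y) = sin x ^ 2 - sin y ^ 2` gives
`q₀(k, θ) = (sin ((1 + k) θ / 4) / sin ((1 - k) θ / 4)) ^ 2 - 1`, while directly
`(θ / sin (θ / 2)) ^ 2 * q₀(k, θ) =
  (sin (k θ / 2) / sin (θ / 2)) * (θ / sin ((1 - k) θ / 4)) ^ 2`.
On `(0, 2π)` the first expression is strictly decreasing and the second strictly increasing in
`θ`: `sin (b t) / sin (a t)` decreases for `0 < a < b` because `u cot u` decreases on `(0, π)`,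
and `t / sin (a t)` increases by concavity of `sin`. Comparing both with their values at `θ = π`,
where `q₀(k, π) = q₁(k)`, gives the four bounds.
-/

lemma sin_add_mul_sin_sub (x y : ℝ) : sin (x + y) * sin (x - y) = sin x ^ 2 - sin y ^ 2 := by
  rw [sin_add, sin_sub]
  linear_combination sin x ^ 2 * sin_sq_add_cos_sq y - sin y ^ 2 * sin_sq_add_cos_sq x

lemma sin_mul_pos_of_mem_Ioo {c t : ℝ} (hc : 0 < c) (ht : t ∈ Ioo 0 (π / c)) :
    0 < sin (c * t) :=
  sin_pos_of_pos_of_lt_pi (mul_pos hc ht.1) ((lt_div_iff₀' hc).1 ht.2)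

lemma Ioo_zero_two_pi_subset {c : ℝ} (hc : 0 < c) (hc' : c ≤ 1 / 2) :
    Ioo 0 (2 * π) ⊆ Ioo 0 (π / c) :=
  Ioo_subset_Ioo_right <| (le_div_iff₀' hc).2 <| by nlinarith [pi_pos]

lemma strictAntiOn_mul_cos_div_sin : StrictAntiOn (fun u => u * cos u / sin u) (Ioo 0 π) := by
  refine strictAntiOn_of_deriv_neg (convex_Ioo 0 π)
    (ContinuousOn.div (by fun_prop) (by fun_prop)
      fun u hu => (sin_pos_of_pos_of_lt_pi hu.1 hu.2).ne')
    fun u hu => ?_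
  rw [interior_Ioo] at hu
  have hsin := sin_pos_of_pos_of_lt_pi hu.1 hu.2
  have hderiv :
      HasDerivAt (fun u => u * cos u / sin u) ((sin u * cos u - u) / sin u ^ 2 : ℝ) u := by
    refine (((hasDerivAt_id' u).fun_mul (hasDerivAt_cos u)).fun_div (hasDerivAt_sin u)
      hsin.ne').congr_deriv ?_
    linear_combination (-u / sin u ^ 2) * sin_sq_add_cos_sq u
  rw [hderiv.deriv]
  -- `sin u * cos u = sin (2 * u) / 2 < u`
  have : sin u * cos u < u := by nlinarith [sin_two_mul u, sin_lt (by linarith [hu.1] : 0 < 2 * u)]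
  exact div_neg_of_neg_of_pos (by linarith) (by positivity)

lemma mul_cos_mul_mul_sin_mul_lt {a b x : ℝ} (ha : 0 < a) (hab : a < b) (hx : 0 < x)
    (hbx : b * x < π) : b * cos (b * x) * sin (a * x) < a * cos (a * x) * sin (b * x) := by
  have hax : a * x < b * x := by gcongr
  have hax0 := mul_pos ha hx
  have hbx0 := mul_pos (ha.trans hab) hx
  have hsa := sin_pos_of_pos_of_lt_pi hax0 (hax.trans hbx)
  have hsb := sin_pos_of_pos_of_lt_pi hbx0 hbx
  have h := strictAntiOn_mul_cos_div_sin ⟨hax0, hax.trans hbx⟩ ⟨hbx0, hbx⟩ hax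
  rw [div_lt_div_iff₀ hsb hsa] at h
  refine lt_of_mul_lt_mul_left ?_ hx.le
  linarith

lemma strictAntiOn_sin_mul_div_sin_mul {a b : ℝ} (ha : 0 < a) (hab : a < b) :
    StrictAntiOn (fun t => sin (b * t) / sin (a * t)) (Ioo 0 (π / b)) := by
  have hb : 0 < b := ha.trans hab
  have hsub : Ioo 0 (π / b) ⊆ Ioo 0 (π / a) :=
    Ioo_subset_Ioo_right (div_le_div_of_nonneg_left pi_pos.le ha hab.le)
  refine strictAntiOn_of_deriv_neg (convex_Ioo 0 _)
    (ContinuousOn.div (by fun_prop) (by fun_prop)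
      fun t ht => (sin_mul_pos_of_mem_Ioo ha (hsub ht)).ne')
    fun t ht => ?_
  rw [interior_Ioo] at ht
  have hsa := sin_mul_pos_of_mem_Ioo ha (hsub ht)
  have hderiv : HasDerivAt (fun t => sin (b * t) / sin (a * t))
      ((cos (b * t) * b * sin (a * t) - sin (b * t) * (cos (a * t) * a)) / sin (a * t) ^ 2) t := by
    refine ((((hasDerivAt_id' t).const_mul b).sin).fun_div
      (((hasDerivAt_id' t).const_mul a).sin) hsa.ne').congr_deriv ?_
    ring
  rw [hderiv.deriv]
  have := mul_cos_mul_mul_sin_mul_lt ha hab ht.1 ((lt_div_iff₀' hb).1 ht.2)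
  exact div_neg_of_neg_of_pos (by linarith) (by positivity)

lemma strictMonoOn_div_sin_mul {a : ℝ} (ha : 0 < a) :
    StrictMonoOn (fun t => t / sin (a * t)) (Ioo 0 (π / a)) := by
  intro s hs t ht hst
  have hss := sin_mul_pos_of_mem_Ioo ha hs
  have hst' := sin_mul_pos_of_mem_Ioo ha ht
  have has := mul_pos ha hs.1
  have hat := mul_pos ha ht.1
  -- a chord of the concave `sin` from the origin gets flatter as its endpoint moves right
  have hsec := strictConcaveOn_sin_Icc.secant_strict_mono (a := 0) ⟨le_rfl, pi_pos.le⟩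
    ⟨has.le, ((lt_div_iff₀' ha).1 hs.2).le⟩ ⟨hat.le, ((lt_div_iff₀' ha).1 ht.2).le⟩
    has.ne' hat.ne' (mul_lt_mul_of_pos_left hst ha)
  simp only [sin_zero, sub_zero] at hsec
  rw [div_lt_div_iff₀ hat has] at hsec
  rw [div_lt_div_iff₀ hss hst']
  refine lt_of_mul_lt_mul_left ?_ ha.le
  linarith

lemma q0_eq_sq_sub_one {k t : ℝ} (h : sin ((1 - k) / 4 * t) ≠ 0) :
    q0 k t = (sin ((1 + k) / 4 * t) / sin ((1 - k) / 4 * t)) ^ 2 - 1 := by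
  have e := sin_add_mul_sin_sub ((1 + k) / 4 * t) ((1 - k) / 4 * t)
  rw [show (1 + k) / 4 * t + (1 - k) / 4 * t = t / 2 by ring,
    show (1 + k) / 4 * t - (1 - k) / 4 * t = k * t / 2 by ring] at e
  rw [q0, e, show (1 - k) * t / 4 = (1 - k) / 4 * t by ring, sub_div, div_self (pow_ne_zero 2 h),
    div_pow]

lemma sq_div_sin_mul_q0 {k t : ℝ} (ht : t ≠ 0) :
    (t / sin (t / 2)) ^ 2 * q0 k t =
      sin (k / 2 * t) / sin (1 / 2 * t) * (t / sin ((1 - k) / 4 * t)) ^ 2 := by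
  rw [q0]
  ring_nf
  field_simp

lemma q0_pi (k : ℝ) : q0 k π = q1 k := by
  rw [q0, q1, sin_pi_div_two, one_mul]

lemma sin_mul_pos_of_mem_Ioo_zero_two_pi {c t : ℝ} (hc : 0 < c) (hc' : c ≤ 1 / 2)
    (ht : t ∈ Ioo 0 (2 * π)) : 0 < sin (c * t) :=
  sin_mul_pos_of_mem_Ioo hc (Ioo_zero_two_pi_subset hc hc' ht)

section
variable {k : ℝ} (hk0 : 0 < k) (hk1 : k < 1)
include hk0 hk1

lemma strictAntiOn_q0 : StrictAntiOn (q0 k) (Ioo 0 (2 * π)) := by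
  intro s hs t ht hst
  have hsin : ∀ x ∈ Ioo 0 (2 * π), 0 < sin ((1 - k) / 4 * x) := fun _ hx =>
    sin_mul_pos_of_mem_Ioo_zero_two_pi (by linarith) (by linarith) hx
  have hratio := (strictAntiOn_sin_mul_div_sin_mul (a := (1 - k) / 4) (b := (1 + k) / 4)
    (by linarith) (by linarith)).mono (Ioo_zero_two_pi_subset (by linarith) (by linarith))
    hs ht hst
  rw [q0_eq_sq_sub_one (hsin s hs).ne', q0_eq_sq_sub_one (hsin t ht).ne']
  have := hsin t ht
  have := sin_mul_pos_of_mem_Ioo_zero_two_pi (c := (1 + k) / 4) (by linarith) (by linarith) ht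
  gcongr ?_ ^ 2 - 1

lemma strictMonoOn_sq_div_sin_mul_q0 :
    StrictMonoOn (fun t => (t / sin (t / 2)) ^ 2 * q0 k t) (Ioo 0 (2 * π)) := by
  intro s hs t ht hst
  simp only [sq_div_sin_mul_q0 hs.1.ne', sq_div_sin_mul_q0 ht.1.ne']
  have hsk := sin_mul_pos_of_mem_Ioo_zero_two_pi (c := k / 2) (by linarith) (by linarith) hs
  have hsh := sin_mul_pos_of_mem_Ioo_zero_two_pi (c := 1 / 2) (by norm_num) le_rfl hs
  have hsk' := sin_mul_pos_of_mem_Ioo_zero_two_pi (c := (1 - k) / 4) (by linarith) (by linarith) hs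
  have hratio : sin (k / 2 * s) / sin (1 / 2 * s) < sin (k / 2 * t) / sin (1 / 2 * t) := by
    have h := (strictAntiOn_sin_mul_div_sin_mul (a := k / 2) (b := 1 / 2) (by linarith)
      (by linarith)).mono (Ioo_zero_two_pi_subset (by norm_num) le_rfl) hs ht hst
    rw [← one_div_div (sin (1 / 2 * s)), ← one_div_div (sin (1 / 2 * t))]
    exact one_div_lt_one_div_of_lt (div_pos
      (sin_mul_pos_of_mem_Ioo_zero_two_pi (by norm_num) le_rfl ht)
      (sin_mul_pos_of_mem_Ioo_zero_two_pi (by linarith) (by linarith) ht)) h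
  have hquot := (strictMonoOn_div_sin_mul (a := (1 - k) / 4) (by linarith)).mono
    (Ioo_zero_two_pi_subset (by linarith) (by linarith)) hs ht hst
  have := hs.1
  exact mul_lt_mul'' hratio (pow_lt_pow_left₀ hquot (by positivity) two_ne_zero) (by positivity)
    (by positivity)

end

theorem stmt15 (k θ : ℝ) (hk1 : 0 < k) (hk2 : k < 1) (hθ1 : 0 < θ) (hθ2 : θ < 2 * Real.pi) :
    (θ < Real.pi →
      q1 k ≤ q0 k θ ∧ q0 k θ ≤ (Real.pi * Real.sin (θ / 2) / θ)^2 * q1 k) ∧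
    (Real.pi < θ →
      (Real.pi * Real.sin (θ / 2) / θ)^2 * q1 k ≤ q0 k θ ∧ q0 k θ ≤ q1 k) := by
  have hθ : θ ∈ Ioo 0 (2 * π) := ⟨hθ1, hθ2⟩
  have hπ : π ∈ Ioo 0 (2 * π) := ⟨pi_pos, by linarith [pi_pos]⟩
  have hsin : 0 < sin (θ / 2) := sin_pos_of_pos_of_lt_pi (by positivity) (by linarith)
  have hq0θ : q0 k θ = (sin (θ / 2) / θ) ^ 2 * ((θ / sin (θ / 2)) ^ 2 * q0 k θ) := by
    field_simp
  have hbound : (π * sin (θ / 2) / θ) ^ 2 * q1 k =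
      (sin (θ / 2) / θ) ^ 2 * ((π / sin (π / 2)) ^ 2 * q0 k π) := by
    rw [sin_pi_div_two, q0_pi]
    ring
  have hanti := strictAntiOn_q0 hk1 hk2
  have hmono := strictMonoOn_sq_div_sin_mul_q0 hk1 hk2
  rw [hbound, ← q0_pi]
  refine ⟨fun h => ⟨(hanti hθ hπ h).le, ?_⟩, fun h => ⟨?_, (hanti hπ hθ h).le⟩⟩
  · rw [hq0θ]
    exact mul_le_mul_of_nonneg_left (hmono hθ hπ h).le (by positivity)
  · rw [hq0θ]
    exact mul_le_mul_of_nonneg_left (hmono hπ hθ h).le (by positivity)
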